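/- Let X = {x_1,...,x_n} ⊆ {0,1}^d (n ≥ 2), let c_1,...,c_n ∈ {0,1}^{d''} each have Hamming weight exactly 0.25d'' and pairwise distance at least 0.37d'', let r = 10⌈d/d''⌉, and set A = {a_1,...,a_n, b_1,...,b_n} where a_i = x_i ∘ c_i^r and b_i = x̄_i ∘ 0^{r·d''}. Then max_{a ∈ A} min_{b ∈ A \ {a}} HD(a,b) = d + r·0.25d'' - min_{x ∈ X} max_{y ∈ X} HD(x,y). -/

import Mathlib

/-- `r`-fold repetition of a string `c` of length `d''`. -/
def repStr {d'' : ℕ} (hd : 0 < d'') (r : ℕ) (c : Fin d'' → Bool) : Fin (r * d'') → Bool :=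
  fun j => c ⟨j.val % d'', Nat.mod_lt _ hd⟩

/-!
Write `R = r·d''/4`. Since `b_j` starts with the complement of `x_j` and `c_i` has weight `d''/4`,
`HD(a_i, b_j) = d - HD(x_i, x_j) + R`, while the code distance `0.37 d''` and `r d'' ≥ 10 d` make
the `a_i` pairwise farther apart than `d + R`. Hence the nearest neighbour of `a_i` is the `b_j`
with `x_j` farthest from `x_i`, at distance `d + R - ecc(x_i)`. Every `b_i` has a neighbour within
`d` (another `b_j`), or, if all `x_j` coincide, `a_i` at distance `d + R`; neither exceeds
`d + R - min_i ecc(x_i)`, the value attained at the `a_i` of least eccentricity.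
-/

open Function Set

section Strings

variable {ι β : Type*} [Fintype ι] [DecidableEq β]

theorem hammingDist_eq_sum (u v : ι → β) :
    hammingDist u v = ∑ i, if u i ≠ v i then 1 else 0 :=
  Finset.card_filter _ _

theorem hammingDist_append {m k : ℕ} (u u' : Fin m → β) (v v' : Fin k → β) :
    hammingDist (Fin.append u v) (Fin.append u' v') = hammingDist u u' + hammingDist v v' := by
  simp only [hammingDist_eq_sum, Fin.sum_univ_add, Fin.append_left, Fin.append_right]

theorem hammingDist_not_not (u v : ι → Bool) :
    hammingDist (fun k => !u k) (fun k => !v k) = hammingDist u v :=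
  hammingDist_comp (fun _ => not) fun _ => Bool.not_injective

theorem hammingDist_not_right (u v : ι → Bool) :
    hammingDist u (fun k => !v k) = Fintype.card ι - hammingDist u v := by
  have h : hammingDist u (fun k => !v k) + hammingDist u v = Fintype.card ι := by
    rw [hammingDist_eq_sum, hammingDist_eq_sum, ← Finset.sum_add_distrib, ← Finset.card_univ,
      Finset.card_eq_sum_ones]
    refine Finset.sum_congr rfl fun k _ => ?_
    cases u k <;> cases v k <;> rfl
  omega

theorem hammingDist_false_right (u : ι → Bool) :
    hammingDist u (fun _ => false) = (Finset.univ.filter fun k => u k = true).card := by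
  simp [hammingDist]

theorem repStr_finProdFinEquiv {d : ℕ} (hd : 0 < d) (r : ℕ) (c : Fin d → Bool)
    (p : Fin r × Fin d) : repStr hd r c (finProdFinEquiv p) = c p.2 := by
  simp [repStr, finProdFinEquiv, Nat.add_mul_mod_self_left, Nat.mod_eq_of_lt p.2.isLt]

theorem hammingDist_repStr {d : ℕ} (hd : 0 < d) (r : ℕ) (c c' : Fin d → Bool) :
    hammingDist (repStr hd r c) (repStr hd r c') = r * hammingDist c c' := by
  rw [hammingDist_eq_sum, hammingDist_eq_sum c]
  -- abstracting the summand keeps its decidability instance free of the `Fin r` coordinate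
  generalize hF : (fun i => if c i ≠ c' i then 1 else 0) = F
  rw [← Fintype.sum_equiv finProdFinEquiv (fun p => F p.2) _
      fun p => by simp only [← hF, repStr_finProdFinEquiv]]
  simp only [Fintype.sum_prod_type, Finset.sum_const, Finset.card_univ, Fintype.card_fin,
    smul_eq_mul]

end Strings

section Eccentricity

variable {κ τ γ : Type*} [Fintype τ] [DecidableEq γ] (x : κ → τ → γ)

noncomputable def eccentricity (i : κ) : ℕ :=
  sSup {k | ∃ j, k = hammingDist (x i) (x j)}

noncomputable def radius : ℕ :=
  sInf {m | ∃ i, m = eccentricity x i}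

theorem bddAbove_hammingDist (i : κ) : BddAbove {k | ∃ j, k = hammingDist (x i) (x j)} :=
  ⟨Fintype.card τ, by rintro _ ⟨j, rfl⟩; exact hammingDist_le_card_fintype⟩

theorem hammingDist_le_eccentricity (i j : κ) : hammingDist (x i) (x j) ≤ eccentricity x i :=
  le_csSup (bddAbove_hammingDist x i) ⟨j, rfl⟩

theorem exists_eccentricity_eq (i : κ) : ∃ j, eccentricity x i = hammingDist (x i) (x j) :=
  Nat.sSup_mem (s := {k | ∃ j, k = hammingDist (x i) (x j)}) ⟨_, i, rfl⟩ (bddAbove_hammingDist x i)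

theorem eccentricity_le {d : ℕ} (hx : ∀ i j, hammingDist (x i) (x j) ≤ d) (i : κ) :
    eccentricity x i ≤ d := by
  obtain ⟨j, hj⟩ := exists_eccentricity_eq x i
  exact hj ▸ hx i j

theorem radius_le_eccentricity (i : κ) : radius x ≤ eccentricity x i :=
  Nat.sInf_le ⟨i, rfl⟩

theorem exists_radius_eq [Nonempty κ] : ∃ i, radius x = eccentricity x i :=
  Nat.sInf_mem (s := {m | ∃ i, m = eccentricity x i}) ⟨_, Classical.arbitrary κ, rfl⟩

end Eccentricity

section NearestDist

variable {ι β : Type*} [Fintype ι] [DecidableEq β]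

noncomputable def nearestDist (A : Set (ι → β)) (u : ι → β) : ℕ :=
  sInf {k | ∃ v ∈ A, v ≠ u ∧ k = hammingDist u v}

theorem nearestDist_le {A : Set (ι → β)} {u v : ι → β} (hv : v ∈ A) (hne : v ≠ u) :
    nearestDist A u ≤ hammingDist u v :=
  Nat.sInf_le ⟨v, hv, hne, rfl⟩

theorem le_nearestDist {A : Set (ι → β)} {u v : ι → β} {k : ℕ} (hv : v ∈ A) (hne : v ≠ u)
    (h : ∀ w ∈ A, w ≠ u → k ≤ hammingDist u w) : k ≤ nearestDist A u :=
  le_csInf ⟨_, v, hv, hne, rfl⟩ fun _ ⟨w, hw, hwu, hk⟩ => hk ▸ h w hw hwu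

end NearestDist

section Reduction

variable {κ ι τ β γ : Type*} [Fintype ι] [DecidableEq β] [Fintype τ] [DecidableEq γ]
  (x : κ → τ → γ) (a b : κ → ι → β) {d R : ℕ}

theorem nearestDist_union_left (hR : 0 < R)
    (hab : ∀ i j, hammingDist (a i) (b j) = d - hammingDist (x i) (x j) + R)
    (haa : ∀ i j, i ≠ j → d + R < hammingDist (a i) (a j)) (i : κ) :
    nearestDist (range a ∪ range b) (a i) = d - eccentricity x i + R := by
  obtain ⟨j, hj⟩ := exists_eccentricity_eq x i
  have hne : ∀ j, b j ≠ a i := fun j => (hammingDist_pos.mp (by rw [hab]; omega)).symm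
  refine le_antisymm ?_ (le_nearestDist (.inr ⟨j, rfl⟩) (hne j) ?_)
  · calc nearestDist _ (a i) ≤ hammingDist (a i) (b j) := nearestDist_le (.inr ⟨j, rfl⟩) (hne j)
      _ = d - eccentricity x i + R := by rw [hab, hj]
  · rintro _ (⟨j', rfl⟩ | ⟨j', rfl⟩) hj'
    · have := haa i j' fun h => hj' (h ▸ rfl)
      omega
    · have := hammingDist_le_eccentricity x i j'
      rw [hab]
      omega

theorem nearestDist_union_right_le (hR : d < R) (hx : ∀ i j, hammingDist (x i) (x j) ≤ d)
    (hab : ∀ i j, hammingDist (a i) (b j) = d - hammingDist (x i) (x j) + R)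
    (hbb : ∀ i j, hammingDist (b i) (b j) = hammingDist (x i) (x j)) (i : κ) :
    nearestDist (range a ∪ range b) (b i) ≤ d + R - radius x := by
  have hrad := radius_le_eccentricity x i
  by_cases h : ∃ j, b j ≠ b i
  · obtain ⟨j, hj⟩ := h
    calc nearestDist _ (b i) ≤ hammingDist (b i) (b j) := nearestDist_le (.inr ⟨j, rfl⟩) hj
      _ = hammingDist (x i) (x j) := hbb i j
      _ ≤ d + R - radius x := by have := hx i j; have := eccentricity_le x hx i; omega
  · push Not at h
    have hecc : eccentricity x i = 0 := by
      obtain ⟨j, hj⟩ := exists_eccentricity_eq x i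
      rw [hj, ← hbb, h j, hammingDist_self]
    calc nearestDist _ (b i) ≤ hammingDist (b i) (a i) :=
          nearestDist_le (.inl ⟨i, rfl⟩) (hammingDist_pos.mp (by rw [hab]; omega))
      _ = d + R - radius x := by rw [hammingDist_comm, hab, hammingDist_self]; omega

theorem sSup_nearestDist_union_add_radius [Nonempty κ] (hR : d < R)
    (hx : ∀ i j, hammingDist (x i) (x j) ≤ d)
    (hab : ∀ i j, hammingDist (a i) (b j) = d - hammingDist (x i) (x j) + R)
    (haa : ∀ i j, i ≠ j → d + R < hammingDist (a i) (a j))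
    (hbb : ∀ i j, hammingDist (b i) (b j) = hammingDist (x i) (x j)) :
    sSup {m | ∃ u ∈ range a ∪ range b, m = nearestDist (range a ∪ range b) u} + radius x
      = d + R := by
  obtain ⟨i₀, hi₀⟩ := exists_radius_eq x
  have hleft := nearestDist_union_left x a b (by omega) hab haa
  have hgreatest : IsGreatest {m | ∃ u ∈ range a ∪ range b, m = nearestDist (range a ∪ range b) u}
      (d + R - radius x) := by
    refine ⟨⟨a i₀, .inl ⟨i₀, rfl⟩, ?_⟩, ?_⟩
    · rw [hleft, hi₀]
      have := eccentricity_le x hx i₀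
      omega
    · rintro _ ⟨_, ⟨i, rfl⟩ | ⟨i, rfl⟩, rfl⟩
      · rw [hleft]
        have := radius_le_eccentricity x i
        have := eccentricity_le x hx i
        omega
      · exact nearestDist_union_right_le x a b hR hx hab hbb i
  rw [hgreatest.csSup_eq]
  have := eccentricity_le x hx i₀
  omega

end Reduction

/-- With `d'' = 4N` and `r d'' ≥ 10 d`: `d + r d''/4 ≤ 0.35 r d'' < 0.37 r d''`. -/
theorem add_mul_lt_mul_of_le {d N r h : ℕ} (hd : 1 ≤ d) (hr : 10 * d ≤ 4 * (r * N))
    (hh : 37 * (4 * N) ≤ 100 * h) : d + r * N < r * h := by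
  nlinarith

theorem closest_to_remotest_reduction {n d d'' : ℕ} (hn : 2 ≤ n) (hd : 1 ≤ d) (hd'' : 0 < d'')
    (x : Fin n → Fin d → Bool) (c : Fin n → Fin d'' → Bool)
    (hw : ∀ i, 4 * (Finset.univ.filter fun j => c i j = true).card = d'')
    (hdist : ∀ i j, i ≠ j → 37 * d'' ≤ 100 * hammingDist (c i) (c j)) :
    let r := 10 * ((d + d'' - 1) / d'')
    let a : Fin n → Fin (d + r * d'') → Bool :=
      fun i => Fin.append (x i) (repStr hd'' r (c i))
    let b : Fin n → Fin (d + r * d'') → Bool :=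
      fun i => Fin.append (fun j => !(x i j)) (fun _ => false)
    let A : Set (Fin (d + r * d'') → Bool) := Set.range a ∪ Set.range b
    4 * sSup {m : ℕ | ∃ u ∈ A, m = sInf {k : ℕ | ∃ v ∈ A, v ≠ u ∧ k = hammingDist u v}}
      + 4 * sInf {m : ℕ | ∃ i : Fin n, m = sSup {k : ℕ | ∃ j : Fin n, k = hammingDist (x i) (x j)}}
      = 4 * d + r * d'' := by
  intro r a b A
  have : Nonempty (Fin n) := ⟨⟨0, by omega⟩⟩
  obtain ⟨N, hN⟩ : ∃ N, 4 * N = d'' := ⟨_, hw ⟨0, by omega⟩⟩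
  have hweight : ∀ i, hammingDist (c i) (fun _ => false) = N := fun i => by
    have := hw i
    rw [hammingDist_false_right]
    omega
  have hrN : r * d'' = 4 * (r * N) := by rw [← hN]; ring
  have hr : 10 * d ≤ 4 * (r * N) := by
    have : d ≤ d'' * ((d + d'' - 1) / d'') := le_smul_ceilDiv hd''
    have : r * d'' = 10 * (d'' * ((d + d'' - 1) / d'')) := by simp only [r]; ring
    omega
  have hx : ∀ i j, hammingDist (x i) (x j) ≤ d := fun i j =>
    hammingDist_le_card_fintype.trans_eq (Fintype.card_fin d)
  have hab : ∀ i j, hammingDist (a i) (b j) = d - hammingDist (x i) (x j) + r * N := fun i j => by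
    rw [hammingDist_append, hammingDist_not_right, Fintype.card_fin,
      ← show repStr hd'' r (fun _ => false) = fun _ => false from rfl, hammingDist_repStr, hweight]
  have haa : ∀ i j, i ≠ j → d + r * N < hammingDist (a i) (a j) := fun i j hij => by
    rw [hammingDist_append, hammingDist_repStr]
    have := add_mul_lt_mul_of_le hd hr (by rw [hN]; exact hdist i j hij)
    omega
  have hbb : ∀ i j, hammingDist (b i) (b j) = hammingDist (x i) (x j) := fun i j => by
    rw [hammingDist_append, hammingDist_not_not, hammingDist_self, add_zero]
  have key := sSup_nearestDist_union_add_radius x a b (by omega) hx hab haa hbb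
  change 4 * sSup {m | ∃ u ∈ range a ∪ range b, m = nearestDist (range a ∪ range b) u}
    + 4 * radius x = _
  omega
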